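/- Define |φ₁⟩ = (|00⟩ + i|11⟩)/√2 and |φ₂⟩ = (|01⟩ + |10⟩)/√2. Then |T⟩^{⊗2} = (|φ₁⟩ + e^{iπ/4}|φ₂⟩)/√2, exhibiting a stabilizer decomposition of the two-qubit T magic state into two stabilizer states; moreover ⟨φ₁|φ₂⟩ = 0. -/
import Mathlib

noncomputable def ketT : Fin 2 → ℂ :=
  ![(Real.sqrt 2 : ℂ)⁻¹, Complex.exp (Real.pi * Complex.I / 4) * (Real.sqrt 2 : ℂ)⁻¹]

noncomputable def T2 : (Fin 2 → Fin 2) → ℂ := fun y => ketT (y 0) * ketT (y 1)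

noncomputable def phi1 : (Fin 2 → Fin 2) → ℂ := fun y =>
  if y = ![0, 0] then (Real.sqrt 2 : ℂ)⁻¹
  else if y = ![1, 1] then Complex.I * (Real.sqrt 2 : ℂ)⁻¹ else 0

noncomputable def phi2 : (Fin 2 → Fin 2) → ℂ := fun y =>
  if y = ![0, 1] then (Real.sqrt 2 : ℂ)⁻¹
  else if y = ![1, 0] then (Real.sqrt 2 : ℂ)⁻¹ else 0

lemma exp_sq : Complex.exp (Real.pi * Complex.I / 4) * Complex.exp (Real.pi * Complex.I / 4) = Complex.I := by
  rw [← Complex.exp_add]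
  have : (Real.pi : ℂ) * Complex.I / 4 + Real.pi * Complex.I / 4 = (Real.pi / 2 : ℝ) * Complex.I := by
    push_cast; ring
  rw [this, Complex.exp_mul_I]
  simp

lemma exp_sq' : Complex.exp (Real.pi * Complex.I * (1/4)) ^ 2 = Complex.I := by
  rw [sq]
  have h : (Real.pi : ℂ) * Complex.I * (1/4) = Real.pi * Complex.I / 4 := by ring
  rw [h]; exact exp_sq

/-- `|T⟩^{⊗2} = (|φ₁⟩ + e^{iπ/4}|φ₂⟩)/√2` and `⟨φ₁|φ₂⟩ = 0`. -/
theorem T2_stabilizer_decomposition :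
    T2 = (Real.sqrt 2 : ℂ)⁻¹ •
        (phi1 + Complex.exp (Real.pi * Complex.I / 4) • phi2) ∧
    ∑ y : Fin 2 → Fin 2, starRingEnd ℂ (phi1 y) * phi2 y = 0 := by
  constructor
  · funext y
    have hy : y = ![y 0, y 1] := by funext i; fin_cases i <;> rfl
    rw [hy]
    generalize y 0 = a
    generalize y 1 = b
    fin_cases a <;> fin_cases b <;>
      simp [T2, ketT, phi1, phi2, Matrix.cons_val_zero, Matrix.cons_val_one,
        show ¬((![0,0] : Fin 2 → Fin 2) = ![0,1]) from by decide,
        show ¬((![0,0] : Fin 2 → Fin 2) = ![1,0]) from by decide,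
        show ¬((![0,1] : Fin 2 → Fin 2) = ![0,0]) from by decide,
        show ¬((![0,1] : Fin 2 → Fin 2) = ![1,1]) from by decide,
        show ¬((![1,0] : Fin 2 → Fin 2) = ![0,0]) from by decide,
        show ¬((![1,0] : Fin 2 → Fin 2) = ![1,1]) from by decide,
        show ¬((![1,0] : Fin 2 → Fin 2) = ![0,1]) from by decide,
        show ¬((![1,1] : Fin 2 → Fin 2) = ![0,0]) from by decide,
        show ¬((![1,1] : Fin 2 → Fin 2) = ![0,1]) from by decide,
        show ¬((![1,1] : Fin 2 → Fin 2) = ![1,0]) from by decide]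
    all_goals first
      | ring1
      | linear_combination ((Real.sqrt 2:ℂ)⁻¹ * (Real.sqrt 2:ℂ)⁻¹) * exp_sq
  · apply Finset.sum_eq_zero
    intro y _
    by_cases h1 : y = ![0, 1]
    · subst h1
      simp [phi1, show ¬((![0,1] : Fin 2 → Fin 2) = ![0,0]) from by decide,
        show ¬((![0,1] : Fin 2 → Fin 2) = ![1,1]) from by decide]
    by_cases h2 : y = ![1, 0]
    · subst h2
      simp [phi1, show ¬((![1,0] : Fin 2 → Fin 2) = ![0,0]) from by decide,
        show ¬((![1,0] : Fin 2 → Fin 2) = ![1,1]) from by decide]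
    · simp [phi2, h1, h2]
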